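/- arXiv:1706.06924 — 12 statements merged into one kernel-verified Lean document; each statement's English description precedes it below -/
import Mathlib

section
/- For z₁, z₂ in the open unit disk ℂ with z₁·z₂ ≠ 0, the polynomial P(u) = conj(z₁)·conj(z₂)·u⁴ - (conj(z₁)+conj(z₂))·u³ + (z₁+z₂)·u - z₁·z₂ has at least one root u with |u| = 1. -/
/-!
On the unit circle `conj u = u⁻¹`, so the quartic `a u⁴ + b u³ - b̄ u - ā` equals
`u² (F u - conj (F u))` with `F u = a u² + b u`; its unimodular roots are the points of the circle
where `F` is real. After rotating `u` so that `a u²` is real, `Im (F (-u)) = -Im (F u)`, and the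
intermediate value theorem on a half circle produces such a point.
-/

open Complex ComplexConjugate

lemma mul_exp_neg_arg_div_two_mul_I_sq (a : ℂ) : a * exp (↑(-a.arg / 2) * I) ^ 2 = ‖a‖ := by
  nth_rewrite 1 [← norm_mul_exp_arg_mul_I a]
  have hangle : (a.arg : ℂ) * I + (2 : ℕ) * (↑(-a.arg / 2) * I) = 0 := by push_cast; ring
  rw [mul_assoc, ← exp_nat_mul, ← exp_add, hangle, exp_zero, mul_one]

theorem exists_norm_eq_one_im_quadratic_eq_zero (a b : ℂ) :
    ∃ u : ℂ, ‖u‖ = 1 ∧ (a * u ^ 2 + b * u).im = 0 := by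
  set H : ℝ → ℝ := fun θ => (a * exp (θ * I) ^ 2 + b * exp (θ * I)).im
  set θ₀ := -a.arg / 2
  have hHθ₀ : H (θ₀ + Real.pi) = -H θ₀ := by
    have ha : (a * exp (θ₀ * I) ^ 2).im = 0 := by
      rw [mul_exp_neg_arg_div_two_mul_I_sq, ofReal_im]
    simp only [H, ofReal_add, add_mul, exp_add, exp_pi_mul_I, add_im, mul_one, neg_sq,
      mul_neg, neg_im, ha, zero_add]
  have hzero : (0 : ℝ) ∈ Set.uIcc (H θ₀) (H (θ₀ + Real.pi)) := by
    rw [hHθ₀, Set.mem_uIcc]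
    rcases le_total (H θ₀) 0 with h | h
    · exact Or.inl ⟨h, by linarith⟩
    · exact Or.inr ⟨by linarith, h⟩
  obtain ⟨θ, -, hθ⟩ := intermediate_value_uIcc (by fun_prop : Continuous H).continuousOn hzero
  exact ⟨exp (θ * I), norm_exp_ofReal_mul_I θ, hθ⟩

lemma quartic_eq_sq_mul_sub_conj {u : ℂ} (hu : ‖u‖ = 1) (a b : ℂ) :
    a * u ^ 4 + b * u ^ 3 - conj b * u - conj a
      = u ^ 2 * (a * u ^ 2 + b * u - conj (a * u ^ 2 + b * u)) := by
  have hunit : u * conj u = 1 := by rw [mul_conj', hu]; norm_num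
  simp only [map_add, map_mul, map_pow]
  linear_combination (conj a * (u * conj u + 1) + conj b * u) * hunit

theorem exists_norm_eq_one_quartic_root (a b : ℂ) :
    ∃ u : ℂ, ‖u‖ = 1 ∧ a * u ^ 4 + b * u ^ 3 - conj b * u - conj a = 0 := by
  obtain ⟨u, hu, him⟩ := exists_norm_eq_one_im_quadratic_eq_zero a b
  refine ⟨u, hu, ?_⟩
  rw [quartic_eq_sq_mul_sub_conj hu, sub_conj, him]
  simp

theorem alhazen_quartic_has_unimodular_root_general (z₁ z₂ : ℂ) :
    ∃ u : ℂ, ‖u‖ = 1 ∧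
      conj z₁ * conj z₂ * u ^ 4 - (conj z₁ + conj z₂) * u ^ 3
        + (z₁ + z₂) * u - z₁ * z₂ = 0 := by
  obtain ⟨u, hu, hroot⟩ :=
    exists_norm_eq_one_quartic_root (conj z₁ * conj z₂) (-(conj z₁ + conj z₂))
  refine ⟨u, hu, ?_⟩
  simp only [map_mul, map_neg, map_add, conj_conj] at hroot
  linear_combination hroot

theorem alhazen_quartic_has_unimodular_root (z₁ z₂ : ℂ)
    (h₁ : ‖z₁‖ < 1) (h₂ : ‖z₂‖ < 1) (hz : z₁ * z₂ ≠ 0) :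
    ∃ u : ℂ, ‖u‖ = 1 ∧
      conj z₁ * conj z₂ * u ^ 4 - (conj z₁ + conj z₂) * u ^ 3
        + (z₁ + z₂) * u - z₁ * z₂ = 0 :=
  alhazen_quartic_has_unimodular_root_general z₁ z₂
end

section
/- If a, b ∈ ℂ with |a| = |b| = 1, then a² + 4ab + b² ≠ 0. -/
/-!
For `‖w‖ = 1` we have `w⁻¹ = conj w`, so `w² + c w + 1 = w (w + conj w + c) = w (2 Re w + c)`.
Since `|Re w| ≤ 1`, this cannot vanish once `|c| > 2`. The homogeneous form follows by
putting `w = a / b`.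
-/

open ComplexConjugate

namespace Complex

theorem sq_add_mul_add_one_eq_of_norm_eq_one {w : ℂ} (hw : ‖w‖ = 1) (c : ℝ) :
    w ^ 2 + c * w + 1 = w * ((2 * w.re + c : ℝ) : ℂ) := by
  have hconj : w * conj w = 1 := by
    rw [mul_conj, normSq_eq_norm_sq, hw]; norm_num
  have hre : w + conj w = (2 * w.re : ℝ) := add_conj w
  push_cast at hre ⊢
  linear_combination w * hre - hconj

theorem sq_add_mul_add_one_ne_zero {w : ℂ} (hw : ‖w‖ = 1) {c : ℝ} (hc : 2 < |c|) :
    w ^ 2 + c * w + 1 ≠ 0 := by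
  have hw0 : w ≠ 0 := norm_ne_zero_iff.mp (hw ▸ one_ne_zero)
  obtain ⟨hre_lb, hre_ub⟩ := abs_le.mp (hw ▸ abs_re_le_norm w)
  have hlin : 2 * w.re + c ≠ 0 := by
    intro h
    rcases lt_abs.mp hc with hc | hc <;> linarith
  rw [sq_add_mul_add_one_eq_of_norm_eq_one hw]
  exact mul_ne_zero hw0 (ofReal_ne_zero.mpr hlin)

theorem sq_add_mul_mul_add_sq_ne_zero {a b : ℂ} (hab : ‖a‖ = ‖b‖) (hb : b ≠ 0) {c : ℝ}
    (hc : 2 < |c|) : a ^ 2 + c * a * b + b ^ 2 ≠ 0 := by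
  have hw : ‖a / b‖ = 1 := by rw [norm_div, hab, div_self (norm_ne_zero_iff.mpr hb)]
  have hhom : a ^ 2 + c * a * b + b ^ 2 = b ^ 2 * ((a / b) ^ 2 + c * (a / b) + 1) := by
    field_simp
  rw [hhom]
  exact mul_ne_zero (pow_ne_zero 2 hb) (sq_add_mul_add_one_ne_zero hw hc)

end Complex

theorem unimodular_a2_4ab_b2_ne_zero (a b : ℂ)
    (ha : ‖a‖ = 1) (hb : ‖b‖ = 1) :
    a ^ 2 + 4 * a * b + b ^ 2 ≠ 0 := by
  have hb0 : b ≠ 0 := norm_ne_zero_iff.mp (hb ▸ one_ne_zero)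
  have hc : 2 < |(4 : ℝ)| := by norm_num
  exact_mod_cast Complex.sq_add_mul_mul_add_sq_ne_zero (ha.trans hb.symm) hb0 hc
end

section
/- There do not exist z₁, z₂ ∈ ℂ* and complex numbers a, b with |a| = |b| = 1, a ≠ b, such that conj(z₁)·conj(z₂)·u⁴ - (conj(z₁)+conj(z₂))·u³ + (z₁+z₂)·u - z₁·z₂ = conj(z₁)·conj(z₂)·(u-a)²·(u-b)² as polynomials in u. -/
/-!
Comparing the coefficients of `u²` gives `a² + 4ab + b² = 0`, i.e. `w + w⁻¹ = -4` for `w = a / b`.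
But `w` is unimodular, so `w + w⁻¹ = 2 Re w` has absolute value at most `2`.
-/

open Complex ComplexConjugate

theorem mul_sq_add_four_mul_add_sq_eq_zero_of_forall_eq {K : Type*} [Field K] [CharZero K]
    {p q r s c a b : K}
    (h : ∀ u : K, p * u ^ 4 - q * u ^ 3 + r * u - s = c * (u - a) ^ 2 * (u - b) ^ 2) :
    c * (a ^ 2 + 4 * a * b + b ^ 2) = 0 := by
  -- `(16 (f 1 + f (-1)) - f 2 - f (-2) - 30 f 0) / 24` is the `u²` coefficient of a quartic `f`.
  linear_combination (h 2 + h (-2) + 30 * h 0 - 16 * h 1 - 16 * h (-1)) / 24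

theorem Complex.add_inv_eq_two_mul_re {w : ℂ} (hw : ‖w‖ = 1) : w + w⁻¹ = 2 * w.re := by
  rw [inv_eq_conj hw, add_conj]
  push_cast
  ring

theorem Complex.sq_add_mul_mul_add_sq_ne_zero_s5 {a b : ℂ} {t : ℝ} (hb : b ≠ 0) (hab : ‖a‖ = ‖b‖)
    (ht : 2 < |t|) : a ^ 2 + t * a * b + b ^ 2 ≠ 0 := by
  intro h
  have hw : ‖a / b‖ = 1 := by rw [norm_div, hab, div_self (norm_ne_zero_iff.mpr hb)]
  have ha : a ≠ 0 := norm_ne_zero_iff.mp (hab ▸ norm_ne_zero_iff.mpr hb)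
  have hsum : a / b + (a / b)⁻¹ = -t := by
    field_simp
    linear_combination h
  rw [add_inv_eq_two_mul_re hw] at hsum
  have hre : 2 * (a / b).re = -t := by exact_mod_cast hsum
  have hre_le := abs_re_le_norm (a / b)
  rw [hw, abs_le] at hre_le
  rcases lt_abs.mp ht with ht | ht <;> linarith [hre_le.1, hre_le.2]

theorem no_two_double_unimodular_zeros :
    ¬ ∃ (z₁ z₂ a b : ℂ), z₁ ≠ 0 ∧ z₂ ≠ 0 ∧
      ‖a‖ = 1 ∧ ‖b‖ = 1 ∧ a ≠ b ∧
      ∀ u : ℂ, conj z₁ * conj z₂ * u ^ 4 - (conj z₁ + conj z₂) * u ^ 3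
          + (z₁ + z₂) * u - z₁ * z₂
        = conj z₁ * conj z₂ * (u - a) ^ 2 * (u - b) ^ 2 := by
  rintro ⟨z₁, z₂, a, b, hz₁, hz₂, ha, hb, -, h⟩
  have hc : conj z₁ * conj z₂ ≠ 0 := by simp [hz₁, hz₂]
  have hcoeff :=
    (mul_eq_zero.mp (mul_sq_add_four_mul_add_sq_eq_zero_of_forall_eq h)).resolve_left hc
  have hb₀ : b ≠ 0 := norm_ne_zero_iff.mp (by rw [hb]; exact one_ne_zero)
  refine sq_add_mul_mul_add_sq_ne_zero_s5 (t := 4) hb₀ (ha.trans hb.symm) (by norm_num) ?_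
  exact_mod_cast hcoeff
end

section
/- Let b ∈ ℂ with b ≠ 0 and |b| ≠ 1, and a ∈ ℂ with |a| = 1. Then a² + b/conj(b) + 2a(b + 1/conj(b)) ≠ 0. -/
/-!
For unimodular `a`, `‖a ^ 2 + b / conj b‖ ≤ 2`, whereas `b + 1 / conj b = b (1 + 1 / |b|²)` has norm
`|b| + 1 / |b| ≥ 2`, so `‖2 a (b + 1 / conj b)‖ ≥ 4` and the two summands cannot cancel.
-/

open Complex ComplexConjugate

theorem two_le_add_inv_self {x : ℝ} (hx : 0 < x) : 2 ≤ x + x⁻¹ := by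
  have : 0 ≤ (x - 1) ^ 2 / x := by positivity
  rw [sub_sq, add_div] at this
  field_simp at this ⊢
  nlinarith

namespace RCLike

variable {𝕜 : Type*} [RCLike 𝕜]

theorem norm_div_conj {z : 𝕜} (hz : z ≠ 0) : ‖z / conj z‖ = 1 := by
  rw [norm_div, norm_conj, div_self (norm_ne_zero_iff.mpr hz)]

theorem norm_add_inv_conj (z : 𝕜) : ‖z + (conj z)⁻¹‖ = ‖z‖ + ‖z‖⁻¹ := by
  rcases eq_or_ne z 0 with rfl | hz
  · simp
  have hnorm : (‖z‖ : 𝕜) ≠ 0 := by exact_mod_cast norm_ne_zero_iff.mpr hz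
  have hconj : (conj z)⁻¹ = z / (‖z‖ : 𝕜) ^ 2 := by
    rw [← mul_conj, div_mul_cancel_left₀ hz]
  have hreal : z + (conj z)⁻¹ = z * (((‖z‖ + ‖z‖⁻¹) / ‖z‖ : ℝ) : 𝕜) := by
    rw [hconj]
    push_cast
    field_simp
  rw [hreal, norm_mul, norm_ofReal, abs_of_nonneg (by positivity)]
  field_simp

end RCLike

theorem no_double_unimodular_with_offcircle_pair_general (a b : ℂ)
    (hb0 : b ≠ 0) (ha : ‖a‖ = 1) :
    a ^ 2 + b / conj b + 2 * a * (b + 1 / conj b) ≠ 0 := by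
  intro h
  have hsmall : ‖a ^ 2 + b / conj b‖ ≤ 2 := by
    calc ‖a ^ 2 + b / conj b‖ ≤ ‖a ^ 2‖ + ‖b / conj b‖ := norm_add_le _ _
      _ = 2 := by rw [norm_pow, ha, RCLike.norm_div_conj hb0]; norm_num
  have hlarge : 4 ≤ ‖2 * a * (b + 1 / conj b)‖ := by
    rw [norm_mul, norm_mul, ha, one_div, RCLike.norm_add_inv_conj]
    have := two_le_add_inv_self (norm_pos_iff.mpr hb0)
    norm_num
    linarith
  rw [add_eq_zero_iff_eq_neg.mp h, norm_neg] at hsmall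
  linarith

theorem no_double_unimodular_with_offcircle_pair (a b : ℂ)
    (hb0 : b ≠ 0) (hb1 : ‖b‖ ≠ 1) (ha : ‖a‖ = 1) :
    a ^ 2 + b / conj b + 2 * a * (b + 1 / conj b) ≠ 0 :=
  no_double_unimodular_with_offcircle_pair_general a b hb0 ha
end

section
/- Suppose z₁, z₂ ∈ ℂ* and a, b ∈ ℂ with a ≠ b satisfy conj(z₁)·conj(z₂)·u⁴ - (conj(z₁)+conj(z₂))·u³ + (z₁+z₂)·u - z₁·z₂ = conj(z₁)·conj(z₂)·(u-a)³·(u-b) as polynomials in u. Then |a| = |b| = 1, b = -a, and |z₁ + z₂| = 2·|z₁·z₂|. -/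
/-!
Comparing coefficients of `w u⁴ - t u³ + s u - p = w (u - a)³ (u - b)` gives
`w a (a + b) = 0` (no `u²` term) and `p = -w a³ b`, so `p ≠ 0` forces `a ≠ 0` and `b = -a`; the
`u³` and `u` coefficients then read `t = 2 w a` and `s = 2 w a³`. For the Alhazen quartic
`t = conj s` and `w = conj p`, so taking norms gives `‖s‖ = 2 ‖p‖ ‖a‖ = 2 ‖p‖ ‖a‖³`, whence `‖a‖ = 1`.
-/

open Complex ComplexConjugate

section TripleZero

variable {K : Type*} [Field K] [CharZero K] {w t s p a b : K}

-- Each coefficient is a finite-difference combination of the values at `u = 0, ±1, ±2`.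
theorem triple_zero_coeffs
    (h : ∀ u : K, w * u ^ 4 - t * u ^ 3 + s * u - p = w * (u - a) ^ 3 * (u - b)) :
    w * a * (a + b) = 0 ∧ p = -(w * a ^ 3 * b) ∧ t = w * (3 * a + b) ∧
      s = -(w * (a ^ 3 + 3 * a ^ 2 * b)) := by
  refine ⟨?_, ?_, ?_, ?_⟩
  · linear_combination h 0 / 3 - (h 1 + h (-1)) / 6
  · linear_combination -h 0
  · linear_combination -(h 2 - h (-2) - 2 * h 1 + 2 * h (-1)) / 12
  · linear_combination (8 * (h 1 - h (-1)) - (h 2 - h (-2))) / 12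

theorem triple_zero_antipodal (hw : w ≠ 0) (hp : p ≠ 0)
    (h : ∀ u : K, w * u ^ 4 - t * u ^ 3 + s * u - p = w * (u - a) ^ 3 * (u - b)) :
    a ≠ 0 ∧ b = -a ∧ t = 2 * w * a ∧ s = 2 * w * a ^ 3 := by
  obtain ⟨hu2, hu0, hu3, hu1⟩ := triple_zero_coeffs h
  have ha : a ≠ 0 := by
    rintro rfl
    exact hp (by simpa using hu0)
  have hb : b = -a := eq_neg_of_add_eq_zero_right <|
    (mul_eq_zero.mp hu2).resolve_left (mul_ne_zero hw ha)
  subst hb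
  exact ⟨ha, rfl, by linear_combination hu3, by linear_combination hu1⟩

end TripleZero

theorem norm_eq_one_of_conj_eq_mul {s c a : ℂ} (hc : c ≠ 0) (ha : a ≠ 0)
    (hs : s = c * a ^ 3) (hs' : conj s = c * a) : ‖a‖ = 1 := by
  have hcube : ‖c‖ * ‖a‖ ^ 3 = ‖c‖ * ‖a‖ := by
    rw [← norm_pow, ← norm_mul, ← norm_mul, ← hs, ← hs', norm_conj]
  have hsq : ‖a‖ ^ 2 = 1 := by
    have := mul_left_cancel₀ (norm_ne_zero_iff.mpr hc) hcube
    exact mul_left_cancel₀ (norm_ne_zero_iff.mpr ha) (by linear_combination this)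
  exact (pow_eq_one_iff_of_nonneg (norm_nonneg a) two_ne_zero).mp hsq

theorem triple_zero_case_general (z₁ z₂ a b : ℂ) (hz₁ : z₁ ≠ 0) (hz₂ : z₂ ≠ 0)
    (h : ∀ u : ℂ, conj z₁ * conj z₂ * u ^ 4 - (conj z₁ + conj z₂) * u ^ 3
        + (z₁ + z₂) * u - z₁ * z₂
      = conj z₁ * conj z₂ * (u - a) ^ 3 * (u - b)) :
    ‖a‖ = 1 ∧ ‖b‖ = 1 ∧ b = -a ∧
      ‖z₁ + z₂‖ = 2 * ‖z₁ * z₂‖ := by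
  have hp : z₁ * z₂ ≠ 0 := mul_ne_zero hz₁ hz₂
  have hw : conj z₁ * conj z₂ = conj (z₁ * z₂) := (map_mul _ _ _).symm
  obtain ⟨ha, rfl, ht, hs⟩ :=
    triple_zero_antipodal (hw ▸ (map_ne_zero _).mpr hp) hp h
  have hs' : conj (z₁ + z₂) = 2 * conj z₁ * conj z₂ * a := by
    rw [map_add, ht]; ring
  have ha1 : ‖a‖ = 1 := norm_eq_one_of_conj_eq_mul (c := 2 * conj z₁ * conj z₂)
    (by simp [hz₁, hz₂]) ha (by rw [hs]; ring) hs'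
  refine ⟨ha1, by rwa [norm_neg], rfl, ?_⟩
  rw [← norm_conj, hs']
  simp [ha1, mul_assoc]

theorem triple_zero_case (z₁ z₂ a b : ℂ) (hz₁ : z₁ ≠ 0) (hz₂ : z₂ ≠ 0) (hab : a ≠ b)
    (h : ∀ u : ℂ, conj z₁ * conj z₂ * u ^ 4 - (conj z₁ + conj z₂) * u ^ 3
        + (z₁ + z₂) * u - z₁ * z₂
      = conj z₁ * conj z₂ * (u - a) ^ 3 * (u - b)) :
    ‖a‖ = 1 ∧ ‖b‖ = 1 ∧ b = -a ∧
      ‖z₁ + z₂‖ = 2 * ‖z₁ * z₂‖ :=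
  triple_zero_case_general z₁ z₂ a b hz₁ hz₂ h
end

section
/- Let z₁, z₂ ∈ ℂ* with |z₁ + z₂| < |z₁·z₂|. Then all roots of the polynomial P'(u) = 4·conj(z₁·z₂)·u³ - 3·(conj(z₁)+conj(z₂))·u² + (z₁+z₂) lie in the open unit disk. -/
open Complex ComplexConjugate

/-- Cauchy's root bound in the form of Rouché's estimate: on `1 ≤ ‖u‖` the leading term outweighs
the sum of all the others. -/
theorem norm_lt_one_of_sum_mul_pow_eq_zero {𝕜 : Type*} [NormedDivisionRing 𝕜] {n : ℕ}
    (c : Fin (n + 1) → 𝕜) (hc : ∑ i : Fin n, ‖c i.castSucc‖ < ‖c (Fin.last n)‖) {u : 𝕜}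
    (hu : ∑ i, c i * u ^ (i : ℕ) = 0) : ‖u‖ < 1 := by
  by_contra! hu₁
  have hlead : c (Fin.last n) * u ^ n = -∑ i : Fin n, c i.castSucc * u ^ (i : ℕ) := by
    rw [Fin.sum_univ_castSucc] at hu
    exact eq_neg_of_add_eq_zero_right hu
  have hpow : 0 < ‖u‖ ^ n := pow_pos (by linarith) n
  have hdominated : ‖c (Fin.last n)‖ * ‖u‖ ^ n ≤ (∑ i : Fin n, ‖c i.castSucc‖) * ‖u‖ ^ n :=
    calc ‖c (Fin.last n)‖ * ‖u‖ ^ n = ‖∑ i : Fin n, c i.castSucc * u ^ (i : ℕ)‖ := by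
          rw [← norm_pow, ← norm_mul, hlead, norm_neg]
      _ ≤ ∑ i : Fin n, ‖c i.castSucc‖ * ‖u‖ ^ (i : ℕ) := by
          refine (norm_sum_le _ _).trans_eq ?_
          simp only [norm_mul, norm_pow]
      _ ≤ ∑ i : Fin n, ‖c i.castSucc‖ * ‖u‖ ^ n := by
          gcongr with i
          exact i.is_lt.le
      _ = (∑ i : Fin n, ‖c i.castSucc‖) * ‖u‖ ^ n := (Finset.sum_mul ..).symm
  exact (mul_lt_mul_of_pos_right hc hpow).not_ge hdominated

theorem deriv_roots_in_unit_disk_general (z₁ z₂ : ℂ)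
    (h : ‖z₁ + z₂‖ < ‖z₁ * z₂‖) :
    ∀ u : ℂ, 4 * conj (z₁ * z₂) * u ^ 3 - 3 * (conj z₁ + conj z₂) * u ^ 2
        + (z₁ + z₂) = 0 → ‖u‖ < 1 := by
  intro u hu
  refine norm_lt_one_of_sum_mul_pow_eq_zero
    ![z₁ + z₂, 0, -3 * (conj z₁ + conj z₂), 4 * conj (z₁ * z₂)] ?_ ?_
  · have hconj : ‖conj z₁ + conj z₂‖ = ‖z₁ + z₂‖ := by rw [← map_add, Complex.norm_conj]
    have hcoeff : ‖z₁ + z₂‖ + 3 * ‖z₁ + z₂‖ < 4 * ‖z₁ * z₂‖ := by linarith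
    simpa [Fin.sum_univ_succ, hconj] using hcoeff
  · simp only [Fin.sum_univ_succ, Fin.sum_univ_zero, Matrix.cons_val_zero, Matrix.cons_val_succ,
      Fin.val_zero, Fin.val_succ]
    linear_combination hu

theorem deriv_roots_in_unit_disk (z₁ z₂ : ℂ) (hz₁ : z₁ ≠ 0) (hz₂ : z₂ ≠ 0)
    (h : ‖z₁ + z₂‖ < ‖z₁ * z₂‖) :
    ∀ u : ℂ, 4 * conj (z₁ * z₂) * u ^ 3 - 3 * (conj z₁ + conj z₂) * u ^ 2
        + (z₁ + z₂) = 0 → ‖u‖ < 1 :=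
  deriv_roots_in_unit_disk_general z₁ z₂ h
end

section
/- Let z₁, z₂ ∈ ℂ* with |z₁ + z₂| > 2·|z₁·z₂|. Then the polynomial P'(u) = 4·conj(z₁·z₂)·u³ - 3·(conj(z₁)+conj(z₂))·u² + (z₁+z₂) has exactly two roots (counted with multiplicity) in the closed unit disk. -/
open Complex ComplexConjugate Polynomial

/-!
Write the roots of `a X³ - b X² + c` as `x, y, z`. By Vieta, `xy + yz + zx = 0`, and
`‖b‖ > ‖a‖ + ‖c‖` becomes `‖x + y + z‖ > 1 + ‖xyz‖`. Eliminating `z = -xy / (x + y)`, this says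
`‖s² - p‖ > ‖s‖ + ‖p‖²` for `s = x + y`, `p = xy`. On the closed bidisk one has
`‖s - s̄ p‖ ≤ 1 - ‖p‖²`, and the identity `s² - p = s (s - s̄ p) + p (‖s‖² - 1)` then bounds
`‖s² - p‖` well enough to rule out both that all three roots lie in the closed unit disk and
(applied to `x⁻¹, y⁻¹`) that two of them lie outside the open one. So exactly one root lies
outside the closed disk.
-/

section PairInClosedDisk

variable {x y : ℂ}

theorem norm_add_le_one_add_norm_mul (hx : ‖x‖ ≤ 1) (hy : ‖y‖ ≤ 1) :
    ‖x + y‖ ≤ 1 + ‖x * y‖ := by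
  rw [norm_mul]
  nlinarith [norm_add_le x y, mul_nonneg (sub_nonneg.2 hx) (sub_nonneg.2 hy)]

theorem norm_add_sub_conj_mul_le (hx : ‖x‖ ≤ 1) (hy : ‖y‖ ≤ 1) :
    ‖x + y - conj (x + y) * (x * y)‖ ≤ 1 - ‖x * y‖ ^ 2 := by
  have hx0 := norm_nonneg x
  have hy0 := norm_nonneg y
  have key : x + y - conj (x + y) * (x * y) =
      x * ((1 - ‖y‖ ^ 2 : ℝ) : ℂ) + y * ((1 - ‖x‖ ^ 2 : ℝ) : ℂ) := by
    push_cast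
    rw [← conj_mul' x, ← conj_mul' y, map_add]
    ring
  calc ‖x + y - conj (x + y) * (x * y)‖
      ≤ ‖x‖ * (1 - ‖y‖ ^ 2) + ‖y‖ * (1 - ‖x‖ ^ 2) := by
        rw [key]
        refine (norm_add_le _ _).trans_eq ?_
        rw [norm_mul, norm_mul, norm_real, norm_real, Real.norm_of_nonneg (by nlinarith),
          Real.norm_of_nonneg (by nlinarith)]
    _ = (‖x‖ + ‖y‖) * (1 - ‖x‖ * ‖y‖) := by ring
    _ ≤ (1 + ‖x‖ * ‖y‖) * (1 - ‖x‖ * ‖y‖) := by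
        refine mul_le_mul_of_nonneg_right ?_ (by nlinarith [mul_le_one₀ hx hy0 hy])
        nlinarith [mul_nonneg (sub_nonneg.2 hx) (sub_nonneg.2 hy)]
    _ = 1 - ‖x * y‖ ^ 2 := by rw [norm_mul]; ring

theorem norm_add_sq_sub_mul_le (hx : ‖x‖ ≤ 1) (hy : ‖y‖ ≤ 1) :
    ‖(x + y) ^ 2 - x * y‖ ≤
      ‖x + y‖ * (1 - ‖x * y‖ ^ 2) + ‖x * y‖ * |‖x + y‖ ^ 2 - 1| := by
  have key : (x + y) ^ 2 - x * y = (x + y) * (x + y - conj (x + y) * (x * y)) +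
      x * y * ((‖x + y‖ ^ 2 - 1 : ℝ) : ℂ) := by
    push_cast
    rw [← mul_conj']
    ring
  rw [key]
  refine (norm_add_le _ _).trans ?_
  rw [norm_mul, norm_mul, norm_real, Real.norm_eq_abs]
  gcongr
  exact norm_add_sub_conj_mul_le hx hy

theorem norm_add_sq_sub_mul_le_one_add (hx : ‖x‖ ≤ 1) (hy : ‖y‖ ≤ 1) :
    ‖(x + y) ^ 2 - x * y‖ ≤ 1 + ‖x * y‖ * ‖x + y‖ := by
  have hσ := norm_add_le_one_add_norm_mul hx hy
  have hτ : ‖x * y‖ ≤ 1 := by rw [norm_mul]; exact mul_le_one₀ hx (norm_nonneg y) hy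
  have hτ0 := norm_nonneg (x * y)
  have hcrude : ‖(x + y) ^ 2 - x * y‖ ≤ ‖x + y‖ ^ 2 + ‖x * y‖ :=
    (norm_sub_le _ _).trans_eq (by rw [norm_pow])
  have hfine := norm_add_sq_sub_mul_le hx hy
  rcases le_total ‖x + y‖ 1 with hσ1 | hσ1
  · nlinarith [mul_nonneg (sub_nonneg.2 hσ1)
      (by linarith [norm_nonneg (x + y)] : 0 ≤ ‖x + y‖ + 1 - ‖x * y‖)]
  · rw [abs_of_nonneg (by nlinarith)] at hfine
    nlinarith [mul_nonneg (sub_nonneg.2 hσ) (by positivity : 0 ≤ ‖x * y‖ * ‖x + y‖ + 1)]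

theorem norm_add_sq_sub_mul_le_norm_add_add (hx : ‖x‖ ≤ 1) (hy : ‖y‖ ≤ 1)
    (hxy : ‖x * y‖ ≤ ‖x + y‖) :
    ‖(x + y) ^ 2 - x * y‖ ≤ ‖x + y‖ + ‖x * y‖ ^ 2 := by
  have hσ := norm_add_le_one_add_norm_mul hx hy
  have hτ0 := norm_nonneg (x * y)
  have hcrude : ‖(x + y) ^ 2 - x * y‖ ≤ ‖x + y‖ ^ 2 + ‖x * y‖ :=
    (norm_sub_le _ _).trans_eq (by rw [norm_pow])
  have hfine := norm_add_sq_sub_mul_le hx hy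
  rcases le_total ‖x + y‖ 1 with hσ1 | hσ1
  · rw [abs_of_nonpos (by nlinarith)] at hfine
    rcases le_total (‖x + y‖ + ‖x * y‖) 1 with hστ | hστ
    · nlinarith
    · nlinarith
  · rw [abs_of_nonneg (by nlinarith)] at hfine
    nlinarith [mul_nonneg (mul_nonneg hτ0 (by positivity : 0 ≤ ‖x + y‖ + 1)) (sub_nonneg.2 hσ)]

end PairInClosedDisk

section ZeroSecondSymmetricFunction

variable {x y z : ℂ}

theorem norm_add_add_le_of_norm_le_one (hF : x * y + y * z + z * x = 0) (hx : ‖x‖ ≤ 1)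
    (hy : ‖y‖ ≤ 1) (hz : ‖z‖ ≤ 1) : ‖x + y + z‖ ≤ 1 + ‖x * y * z‖ := by
  by_cases hs : x + y = 0
  · rw [show x + y + z = z by linear_combination hs]
    linarith [norm_nonneg (x * y * z)]
  have hs0 : 0 < ‖x + y‖ := norm_pos_iff.2 hs
  have hxy : ‖x * y‖ ≤ ‖x + y‖ := by
    rw [show x * y = -(z * (x + y)) by linear_combination hF, norm_neg, norm_mul]
    exact mul_le_of_le_one_left hs0.le hz
  have hsum : ‖x + y + z‖ * ‖x + y‖ = ‖(x + y) ^ 2 - x * y‖ := by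
    rw [← norm_mul]; congr 1; linear_combination hF
  have hprod : ‖x * y * z‖ * ‖x + y‖ = ‖x * y‖ ^ 2 := by
    rw [← norm_mul, ← norm_pow, ← norm_neg ((x * y) ^ 2)]; congr 1
    linear_combination x * y * hF
  refine le_of_mul_le_mul_right ?_ hs0
  rw [hsum, add_mul, hprod, one_mul]
  exact norm_add_sq_sub_mul_le_norm_add_add hx hy hxy

theorem norm_add_add_le_of_one_le_norm (hF : x * y + y * z + z * x = 0) (hx : 1 ≤ ‖x‖)
    (hy : 1 ≤ ‖y‖) : ‖x + y + z‖ ≤ 1 + ‖x * y * z‖ := by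
  have hx0 : x ≠ 0 := norm_pos_iff.1 (one_pos.trans_le hx)
  have hy0 : y ≠ 0 := norm_pos_iff.1 (one_pos.trans_le hy)
  have hsum : (x + y + z) * ((x⁻¹ + y⁻¹) * (x⁻¹ * y⁻¹)) = (x⁻¹ + y⁻¹) ^ 2 - x⁻¹ * y⁻¹ := by
    field_simp
    linear_combination hF
  have hprod : x * y * z * ((x⁻¹ + y⁻¹) * (x⁻¹ * y⁻¹)) = -1 := by
    field_simp
    linear_combination hF
  have hK : 0 < ‖(x⁻¹ + y⁻¹) * (x⁻¹ * y⁻¹)‖ :=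
    norm_pos_iff.2 (right_ne_zero_of_mul (a := x * y * z) (by rw [hprod]; norm_num))
  have key := norm_add_sq_sub_mul_le_one_add (x := x⁻¹) (y := y⁻¹)
    (by rw [norm_inv]; exact inv_le_one_of_one_le₀ hx)
    (by rw [norm_inv]; exact inv_le_one_of_one_le₀ hy)
  refine le_of_mul_le_mul_right ?_ hK
  rw [← norm_mul, hsum, add_mul, ← norm_mul, hprod, norm_neg, norm_one, one_mul, norm_mul]
  linarith

theorem card_filter_norm_le_one_eq_two (hF : x * y + y * z + z * x = 0)
    (h : 1 + ‖x * y * z‖ < ‖x + y + z‖) :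
    (({x, y, z} : Multiset ℂ).filter (fun u => ‖u‖ ≤ 1)).card = 2 := by
  have hxy : ¬(1 < ‖x‖ ∧ 1 < ‖y‖) := fun ⟨hx, hy⟩ ↦
    (norm_add_add_le_of_one_le_norm hF hx.le hy.le).not_gt h
  have hxz : ¬(1 < ‖x‖ ∧ 1 < ‖z‖) := fun ⟨hx, hz⟩ ↦ by
    have := norm_add_add_le_of_one_le_norm (z := y) (by linear_combination hF) hx.le hz.le
    rw [add_right_comm, mul_right_comm] at this
    exact this.not_gt h
  have hyz : ¬(1 < ‖y‖ ∧ 1 < ‖z‖) := fun ⟨hy, hz⟩ ↦ by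
    have := norm_add_add_le_of_one_le_norm (z := x) (by linear_combination hF) hy.le hz.le
    rw [← add_rotate, ← mul_rotate] at this
    exact this.not_gt h
  have hall : ¬(‖x‖ ≤ 1 ∧ ‖y‖ ≤ 1 ∧ ‖z‖ ≤ 1) := fun ⟨hx, hy, hz⟩ ↦
    (norm_add_add_le_of_norm_le_one hF hx hy hz).not_gt h
  simp only [Multiset.insert_eq_cons, Multiset.filter_cons, Multiset.filter_singleton]
  split_ifs <;> simp_all

end ZeroSecondSymmetricFunction

theorem exists_roots_eq_three_and_vieta {a b c : ℂ} (ha : a ≠ 0) :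
    ∃ x y z : ℂ, (C a * X ^ 3 - C b * X ^ 2 + C c).roots = {x, y, z} ∧
      b = a * (x + y + z) ∧ x * y + y * z + z * x = 0 ∧ c = -(a * (x * y * z)) := by
  set P : Cubic ℂ := ⟨a, -b, 0, c⟩
  have hP : P.toPoly = C a * X ^ 3 - C b * X ^ 2 + C c := by
    simp only [Cubic.toPoly, P, map_neg, map_zero]; ring
  obtain ⟨x, y, z, h3⟩ := (Cubic.splits_iff_roots_eq_three (P := P) (φ := RingHom.id ℂ) ha).1
    (IsAlgClosed.splits _)
  have hb := Cubic.b_eq_three_roots (P := P) ha h3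
  have hc := Cubic.c_eq_three_roots (P := P) ha h3
  have hd := Cubic.d_eq_three_roots (P := P) ha h3
  simp only [RingHom.id_apply, P] at hb hc hd
  refine ⟨x, y, z, by rw [← hP]; exact h3, by linear_combination -hb, ?_, by linear_combination hd⟩
  linear_combination (mul_eq_zero.1 hc.symm).resolve_left ha

theorem card_roots_filter_norm_le_one_eq_two {a b c : ℂ} (ha : a ≠ 0) (h : ‖a‖ + ‖c‖ < ‖b‖) :
    ((C a * X ^ 3 - C b * X ^ 2 + C c).roots.filter (fun u => ‖u‖ ≤ 1)).card = 2 := by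
  obtain ⟨x, y, z, hroots, rfl, hF, rfl⟩ := exists_roots_eq_three_and_vieta (b := b) (c := c) ha
  rw [hroots]
  refine card_filter_norm_le_one_eq_two hF (lt_of_mul_lt_mul_left ?_ (norm_nonneg a))
  rwa [mul_add, mul_one, ← norm_mul, ← norm_mul, ← norm_neg (a * (x * y * z))]

theorem deriv_two_roots_in_closed_disk (z₁ z₂ : ℂ) (hz₁ : z₁ ≠ 0) (hz₂ : z₂ ≠ 0)
    (h : ‖z₁ + z₂‖ > 2 * ‖z₁ * z₂‖) :
    ((C (4 * conj (z₁ * z₂)) * X ^ 3 - C (3 * (conj z₁ + conj z₂)) * X ^ 2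
        + C (z₁ + z₂)).roots.filter (fun u => ‖u‖ ≤ 1)).card = 2 := by
  refine card_roots_filter_norm_le_one_eq_two ?_ ?_
  · exact mul_ne_zero (by norm_num) ((_root_.map_ne_zero conj).2 (mul_ne_zero hz₁ hz₂))
  · rw [← map_add, norm_mul, norm_mul, norm_conj, norm_conj]
    rw [norm_mul] at h
    norm_num
    linarith
end

section
/- Let z₁, z₂ ∈ ℂ* and suppose the polynomial P(u) = conj(z₁)·conj(z₂)·u⁴ - (conj(z₁)+conj(z₂))·u³ + (z₁+z₂)·u - z₁·z₂ factors as conj(z₁)conj(z₂)·(u-a)(u-b)(u-c)(u-1/conj(c)) with |a| = |b| = 1 and 0 < |c| < 1. Then |z₁ + z₂| > |z₁·z₂|. -/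
open Complex ComplexConjugate

/-!
Write `d = 1 / conj c`, `r = ‖c‖`. Comparing the coefficients of `u³` and `u²` gives
`conj (z₁ + z₂) = conj (z₁ z₂) · e₁` and `e₂ = 0`, where `eᵢ` are the elementary symmetric
functions of `a, b, c, d`; so it suffices to show `‖e₁‖ > 1`. With `s = c + d` and `p = c d`,
`e₂ = 0` says `e₁ s = s² - p - a b`. Now `‖s‖ = r + r⁻¹ =: m > 2` and `‖s² - p‖ = m² - 1`, hence
`‖e₁‖ m ≥ m² - 2 > m`.
-/

theorem quartic_coeffs_of_forall_eq {K : Type*} [Field K] [CharZero K]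
    {q s₃ s₂ s₁ s₀ a b c d : K}
    (h : ∀ u, q * u ^ 4 + s₃ * u ^ 3 + s₂ * u ^ 2 + s₁ * u + s₀
      = q * (u - a) * (u - b) * (u - c) * (u - d)) :
    s₃ = -q * (a + b + c + d) ∧
      s₂ = q * (a * b + a * c + a * d + b * c + b * d + c * d) := by
  -- finite differences of the identity at `u = 0, ±1, ±2`
  constructor
  · linear_combination (h 2 - h (-2) - 2 * h 1 + 2 * h (-1)) / 12
  · linear_combination (-h 2 - h (-2) + 16 * h 1 + 16 * h (-1) - 30 * h 0) / 24

theorem norm_sq_sub_sub_norm_le_norm_add_mul_norm {F : Type*} [NormedField F] {a b s p : F}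
    (h : a * b + (a + b) * s + p = 0) :
    ‖s ^ 2 - p‖ - ‖a * b‖ ≤ ‖a + b + s‖ * ‖s‖ := by
  have hmul : (a + b + s) * s = s ^ 2 - p - a * b := by linear_combination h
  rw [← norm_mul, hmul]
  exact norm_sub_norm_le _ _

theorem two_lt_add_inv_self {r : ℝ} (hr : 0 < r) (hr1 : r ≠ 1) : 2 < r + r⁻¹ := by
  have hsq : 0 < (r - 1) ^ 2 := by positivity
  have hdiff : r + r⁻¹ - 2 = (r - 1) ^ 2 / r := by field_simp; ring
  linarith [div_pos hsq hr]

theorem add_inv_conj_eq {c : ℂ} (hc : c ≠ 0) : c + (conj c)⁻¹ = ((‖c‖ ^ 2 + 1 : ℝ) : ℂ) / conj c := by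
  have hcc : conj c ≠ 0 := by simpa using hc
  field_simp
  push_cast
  rw [mul_conj']

theorem norm_add_inv_conj {c : ℂ} (hc : c ≠ 0) : ‖c + (conj c)⁻¹‖ = ‖c‖ + ‖c‖⁻¹ := by
  have hr : 0 < ‖c‖ := norm_pos_iff.mpr hc
  rw [add_inv_conj_eq hc, norm_div, norm_conj, norm_real, Real.norm_of_nonneg (by positivity)]
  field_simp

theorem norm_sq_add_inv_conj_sub_mul {c : ℂ} (hc : c ≠ 0) :
    ‖(c + (conj c)⁻¹) ^ 2 - c * (conj c)⁻¹‖ = (‖c‖ + ‖c‖⁻¹) ^ 2 - 1 := by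
  have hr : 0 < ‖c‖ := norm_pos_iff.mpr hc
  have hcc : conj c ≠ 0 := by simpa using hc
  have hexpr : (c + (conj c)⁻¹) ^ 2 - c * (conj c)⁻¹
      = ((‖c‖ ^ 4 + ‖c‖ ^ 2 + 1 : ℝ) : ℂ) / conj c ^ 2 := by
    rw [add_inv_conj_eq hc]
    field_simp
    push_cast
    linear_combination -mul_conj' c
  rw [hexpr, norm_div, norm_pow, norm_conj, norm_real, Real.norm_of_nonneg (by positivity)]
  field_simp
  ring

theorem one_lt_norm_add_add_inv_conj {a b c : ℂ} (hab : ‖a * b‖ = 1) (hc : c ≠ 0)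
    (hc1 : ‖c‖ ≠ 1) (h : a * b + (a + b) * (c + (conj c)⁻¹) + c * (conj c)⁻¹ = 0) :
    1 < ‖a + b + (c + (conj c)⁻¹)‖ := by
  have hm : 2 < ‖c‖ + ‖c‖⁻¹ := two_lt_add_inv_self (norm_pos_iff.mpr hc) hc1
  have key := norm_sq_sub_sub_norm_le_norm_add_mul_norm h
  rw [norm_sq_add_inv_conj_sub_mul hc, norm_add_inv_conj hc, hab] at key
  nlinarith

theorem two_simple_unimodular_zeros_case (z₁ z₂ a b c : ℂ)
    (hz₁ : z₁ ≠ 0) (hz₂ : z₂ ≠ 0)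
    (ha : ‖a‖ = 1) (hb : ‖b‖ = 1)
    (hc0 : 0 < ‖c‖) (hc1 : ‖c‖ < 1)
    (h : ∀ u : ℂ, conj z₁ * conj z₂ * u ^ 4 - (conj z₁ + conj z₂) * u ^ 3
        + (z₁ + z₂) * u - z₁ * z₂
      = conj z₁ * conj z₂ * (u - a) * (u - b) * (u - c) * (u - 1 / conj c)) :
    ‖z₁ + z₂‖ > ‖z₁ * z₂‖ := by
  have hc : c ≠ 0 := norm_pos_iff.mp hc0
  have hq : conj z₁ * conj z₂ ≠ 0 := by simp [hz₁, hz₂]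
  obtain ⟨h₃, h₂⟩ := quartic_coeffs_of_forall_eq (q := conj z₁ * conj z₂)
    (s₃ := -(conj z₁ + conj z₂)) (s₂ := 0) (s₁ := z₁ + z₂) (s₀ := -(z₁ * z₂))
    (a := a) (b := b) (c := c) (d := (conj c)⁻¹)
    fun u => by rw [← one_div]; linear_combination h u
  have he₂ : a * b + (a + b) * (c + (conj c)⁻¹) + c * (conj c)⁻¹ = 0 := by
    linear_combination (mul_eq_zero.mp h₂.symm).resolve_left hq
  have he₁ := one_lt_norm_add_add_inv_conj (by rw [norm_mul, ha, hb, one_mul]) hc hc1.ne he₂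
  have hsum : conj (z₁ + z₂) = conj z₁ * conj z₂ * (a + b + (c + (conj c)⁻¹)) := by
    rw [map_add]; linear_combination -h₃
  calc ‖z₁ * z₂‖ < ‖z₁ * z₂‖ * ‖a + b + (c + (conj c)⁻¹)‖ :=
        lt_mul_of_one_lt_right (norm_pos_iff.mpr (mul_ne_zero hz₁ hz₂)) he₁
    _ = ‖z₁ + z₂‖ := by rw [← norm_conj (z₁ + z₂), hsum, ← map_mul, norm_mul (conj _), norm_conj]
end

section
/- Let z₁, z₂ ∈ ℂ* and a, b, c ∈ ℂ with |a| = |b| = |c| = 1, and suppose conj(z₁)conj(z₂)·u⁴ - (conj(z₁)+conj(z₂))·u³ + (z₁+z₂)·u - z₁·z₂ = conj(z₁)conj(z₂)·(u-a)²·(u-b)·(u-c) as polynomials in u. Then |z₁·z₂| ≤ |z₁ + z₂| ≤ 2·|z₁·z₂|. -/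
/-!
Comparing the coefficients of `u²` and `u` gives `2 (z₁ + z₂) = conj (z₁ z₂) · a · (a² - 3bc)`,
and for unimodular `a, b, c` the triangle inequality puts `‖a² - 3bc‖` in `[2, 4]`.
-/

open Complex ComplexConjugate

theorem two_mul_linear_coeff_eq_of_factorization {K : Type*} [Field K] [CharZero K]
    {p r s q a b c : K}
    (h : ∀ u : K, p * u ^ 4 - r * u ^ 3 + s * u - q = p * (u - a) ^ 2 * (u - b) * (u - c)) :
    2 * s = p * a * (a ^ 2 - 3 * (b * c)) := by
  -- evaluating at `u = 0, ±1, ±2` isolates the coefficients of `u²` and `u`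
  have quadratic_coeff : p * (a ^ 2 + 2 * a * b + 2 * a * c + b * c) = 0 := by
    linear_combination h 0 - (1 / 2 : K) * h 1 - (1 / 2 : K) * h (-1)
  have linear_coeff : s + p * (a ^ 2 * b + a ^ 2 * c + 2 * a * b * c) = 0 := by
    linear_combination (2 / 3 : K) * h 1 - (2 / 3 : K) * h (-1)
      - (1 / 12 : K) * h 2 + (1 / 12 : K) * h (-2)
  linear_combination 2 * linear_coeff - a * quadratic_coeff

theorem two_le_norm_sub_three_mul_and_le_four {𝕜 : Type*} [RCLike 𝕜] {x y : 𝕜}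
    (hx : ‖x‖ = 1) (hy : ‖y‖ = 1) :
    2 ≤ ‖x - 3 * y‖ ∧ ‖x - 3 * y‖ ≤ 4 := by
  have h3y : ‖3 * y‖ = 3 := by rw [norm_mul, hy, RCLike.norm_ofNat, mul_one]
  constructor
  · have := norm_sub_norm_le (3 * y) x
    rw [h3y, hx, norm_sub_rev] at this
    linarith
  · have := norm_sub_le x (3 * y)
    rw [h3y, hx] at this
    linarith

theorem double_and_two_simple_unimodular_zeros_general (z₁ z₂ a b c : ℂ)
    (ha : ‖a‖ = 1) (hb : ‖b‖ = 1) (hc : ‖c‖ = 1)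
    (h : ∀ u : ℂ, conj z₁ * conj z₂ * u ^ 4 - (conj z₁ + conj z₂) * u ^ 3
        + (z₁ + z₂) * u - z₁ * z₂
      = conj z₁ * conj z₂ * (u - a) ^ 2 * (u - b) * (u - c)) :
    ‖z₁ * z₂‖ ≤ ‖z₁ + z₂‖ ∧
      ‖z₁ + z₂‖ ≤ 2 * ‖z₁ * z₂‖ := by
  have hsum := two_mul_linear_coeff_eq_of_factorization h
  have hnorm : 2 * ‖z₁ + z₂‖ = ‖z₁ * z₂‖ * ‖a ^ 2 - 3 * (b * c)‖ := by
    simpa [norm_mul, ha] using congrArg norm hsum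
  obtain ⟨hlower, hupper⟩ := two_le_norm_sub_three_mul_and_le_four
    (by rw [norm_pow, ha, one_pow] : ‖a ^ 2‖ = 1) (by rw [norm_mul, hb, hc, mul_one] : ‖b * c‖ = 1)
  constructor <;> nlinarith [norm_nonneg (z₁ * z₂)]

theorem double_and_two_simple_unimodular_zeros (z₁ z₂ a b c : ℂ)
    (hz₁ : z₁ ≠ 0) (hz₂ : z₂ ≠ 0)
    (ha : ‖a‖ = 1) (hb : ‖b‖ = 1) (hc : ‖c‖ = 1)
    (h : ∀ u : ℂ, conj z₁ * conj z₂ * u ^ 4 - (conj z₁ + conj z₂) * u ^ 3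
        + (z₁ + z₂) * u - z₁ * z₂
      = conj z₁ * conj z₂ * (u - a) ^ 2 * (u - b) * (u - c)) :
    ‖z₁ * z₂‖ ≤ ‖z₁ + z₂‖ ∧
      ‖z₁ + z₂‖ ≤ 2 * ‖z₁ * z₂‖ :=
  double_and_two_simple_unimodular_zeros_general z₁ z₂ a b c ha hb hc h
end

section
/- Let z₁, z₂ ∈ ℂ be nonzero with z₁·conj(z₂) ∉ ℝ. Then the orthocenter of the triangle with vertices 0, 1/conj(z₁), 1/conj(z₂) is h = ((conj(z₂)-conj(z₁))/(conj(z₁)·conj(z₂))) · ((z₁·conj(z₂)+conj(z₁)·z₂)/(z₁·conj(z₂)-conj(z₁)·z₂)), and h satisfies conj(z₁)·conj(z₂)·h² - (conj(z₁)+conj(z₂))·h + (z₁+z₂)·conj(h) - z₁·z₂·conj(h)² = 0. -/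
open Complex ComplexConjugate

theorem orthocenter_on_conic (z₁ z₂ h : ℂ) (hz₁ : z₁ ≠ 0) (hz₂ : z₂ ≠ 0)
    (hnr : (z₁ * conj z₂).im ≠ 0)
    (hH₁ : ((h - 0) * conj (1 / conj z₁ - 1 / conj z₂)).re = 0)
    (hH₂ : ((h - 1 / conj z₁) * conj (1 / conj z₂ - 0)).re = 0) :
    h = ((conj z₂ - conj z₁) / (conj z₁ * conj z₂))
          * ((z₁ * conj z₂ + conj z₁ * z₂) / (z₁ * conj z₂ - conj z₁ * z₂)) ∧
    conj z₁ * conj z₂ * h ^ 2 - (conj z₁ + conj z₂) * h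
      + (z₁ + z₂) * conj h - z₁ * z₂ * conj h ^ 2 = 0 := by
  have hz₁' : (conj z₁ : ℂ) ≠ 0 := by simpa using hz₁
  have hz₂' : (conj z₂ : ℂ) ≠ 0 := by simpa using hz₂
  have hd : z₁ * conj z₂ - conj z₁ * z₂ ≠ 0 := by
    intro e
    apply hnr
    have h2 : conj (z₁ * conj z₂) = z₁ * conj z₂ := by
      rw [map_mul, Complex.conj_conj]; linear_combination -e
    rw [Complex.conj_eq_iff_im] at h2
    exact h2
  have e1 : h * (1/z₁ - 1/z₂) + conj h * (1/conj z₁ - 1/conj z₂) = 0 := by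
    have t := Complex.add_conj ((h - 0) * conj (1 / conj z₁ - 1 / conj z₂))
    rw [hH₁] at t
    simp only [map_mul, map_sub, map_div₀, map_one, Complex.conj_conj, sub_zero,
      Complex.ofReal_zero, mul_zero] at t
    linear_combination t
  have e2 : (h - 1/conj z₁) * (1/z₂) + (conj h - 1/z₁) * (1/conj z₂) = 0 := by
    have t := Complex.add_conj ((h - 1 / conj z₁) * conj (1 / conj z₂ - 0))
    rw [hH₂] at t
    simp only [map_mul, map_sub, map_div₀, map_one, Complex.conj_conj, sub_zero,
      Complex.ofReal_zero, mul_zero] at t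
    linear_combination t
  have E1 : h * (z₂ - z₁) * conj z₁ * conj z₂ + conj h * (conj z₂ - conj z₁) * z₁ * z₂ = 0 := by
    field_simp at e1
    linear_combination e1
  have E2 : h * z₁ * conj z₁ * conj z₂ + conj h * z₁ * conj z₁ * z₂
      = z₁ * conj z₂ + conj z₁ * z₂ := by
    field_simp at e2
    linear_combination e2
  have key : z₁ * z₂ * (h * (conj z₁ * conj z₂ * (z₁ * conj z₂ - conj z₁ * z₂)))
      = z₁ * z₂ * ((conj z₂ - conj z₁) * (z₁ * conj z₂ + conj z₁ * z₂)) := by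
    linear_combination ((conj z₂ - conj z₁) * z₁ * z₂) * E2 - (z₁ * conj z₁ * z₂) * E1
  have key2 := mul_left_cancel₀ (mul_ne_zero hz₁ hz₂) key
  have hmain : h = ((conj z₂ - conj z₁) / (conj z₁ * conj z₂))
          * ((z₁ * conj z₂ + conj z₁ * z₂) / (z₁ * conj z₂ - conj z₁ * z₂)) := by
    rw [div_mul_div_comm, eq_div_iff (mul_ne_zero (mul_ne_zero hz₁' hz₂') hd)]
    linear_combination key2
  refine ⟨hmain, ?_⟩
  have kc : conj h * (z₁ * z₂ * (conj z₁ * z₂ - z₁ * conj z₂))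
      = (z₂ - z₁) * (conj z₁ * z₂ + z₁ * conj z₂) := by
    have t := congrArg conj key2
    simpa only [map_mul, map_sub, map_add, Complex.conj_conj] using t
  have hM : z₁ * z₂ * conj z₁ * conj z₂ * (z₁ * conj z₂ - conj z₁ * z₂) ^ 2 ≠ 0 := by
    apply mul_ne_zero (mul_ne_zero (mul_ne_zero (mul_ne_zero hz₁ hz₂) hz₁') hz₂')
    exact pow_ne_zero 2 hd
  have big : (conj z₁ * conj z₂ * h ^ 2 - (conj z₁ + conj z₂) * h
      + (z₁ + z₂) * conj h - z₁ * z₂ * conj h ^ 2)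
      * (z₁ * z₂ * conj z₁ * conj z₂ * (z₁ * conj z₂ - conj z₁ * z₂) ^ 2) = 0 := by
    linear_combination
      (z₁ * z₂ * (h * (conj z₁ * conj z₂ * (z₁ * conj z₂ - conj z₁ * z₂))
          + (conj z₂ - conj z₁) * (z₁ * conj z₂ + conj z₁ * z₂))
        - (conj z₁ + conj z₂) * z₁ * z₂ * (z₁ * conj z₂ - conj z₁ * z₂)) * key2
      + (-(z₁ + z₂) * conj z₁ * conj z₂ * (z₁ * conj z₂ - conj z₁ * z₂)
        - conj z₁ * conj z₂ * (conj h * (z₁ * z₂ * (conj z₁ * z₂ - z₁ * conj z₂))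
          + (z₂ - z₁) * (conj z₁ * z₂ + z₁ * conj z₂))) * kc
  exact (mul_eq_zero.mp big).resolve_right hM
end

section
/- Let z ∈ ℂ with 0 < |z| < 1 and set u = z/|z|. Then conj(z)²·u⁴ - 2·conj(z)·u³ + 2·z·u - z² = 0, and the only roots of this quartic on the unit circle are ±z/|z|; the remaining roots are (1 ± √(1-|z|²))/conj(z), one of modulus greater than 1 and one of modulus less than 1. -/
/-!
The quartic factors as `(z̄u² - z)(z̄u² - 2u + z)`. The first factor vanishes exactly when
`u² = z / z̄ = (z / |z|)²`. On the unit circle the second factor cannot vanish, since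
`|z̄u² + z| ≤ 2|z| < 2 = |2u|`; its two roots are those of a quadratic with discriminant
`4(1 - |z|²)`, and `1 - √(1 - r²) < r < 1 + √(1 - r²)` places them inside and outside the circle.
-/

open Complex ComplexConjugate

lemma quartic_eq_mul {R : Type*} [CommRing R] (a b u : R) :
    a ^ 2 * u ^ 4 - 2 * a * u ^ 3 + 2 * b * u - b ^ 2
      = (a * u ^ 2 - b) * (a * u ^ 2 - 2 * u + b) := by
  ring

lemma mul_sq_sub_two_mul_add_eq_zero {K : Type*} [Field K] {a b s : K} (ha : a ≠ 0)
    (hs : s ^ 2 = 1 - a * b) : a * ((1 + s) / a) ^ 2 - 2 * ((1 + s) / a) + b = 0 := by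
  field_simp
  linear_combination hs

lemma conj_mul_sq_eq_self_iff {z : ℂ} (hz : z ≠ 0) (u : ℂ) :
    conj z * u ^ 2 = z ↔ u = z / ‖z‖ ∨ u = -(z / ‖z‖) := by
  have hzc : conj z ≠ 0 := (map_ne_zero _).2 hz
  have hnorm : (‖z‖ : ℂ) ≠ 0 := by exact_mod_cast norm_ne_zero_iff.2 hz
  have hsq : (z / ‖z‖) ^ 2 = z / conj z := by
    rw [div_pow, div_eq_div_iff (pow_ne_zero 2 hnorm) hzc, ← conj_mul']
    ring
  rw [← sq_eq_sq_iff_eq_or_eq_neg, hsq, eq_div_iff hzc, mul_comm]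

lemma mul_sq_sub_two_mul_add_ne_zero {a b v : ℂ} (hab : ‖a‖ + ‖b‖ < 2) (hv : ‖v‖ = 1) :
    a * v ^ 2 - 2 * v + b ≠ 0 := by
  intro h
  have h2v : 2 * v = a * v ^ 2 + b := by linear_combination -h
  have : (2 : ℝ) ≤ ‖a‖ + ‖b‖ :=
    calc (2 : ℝ) = ‖2 * v‖ := by simp [hv]
      _ = ‖a * v ^ 2 + b‖ := by rw [h2v]
      _ ≤ ‖a * v ^ 2‖ + ‖b‖ := norm_add_le _ _
      _ = ‖a‖ + ‖b‖ := by simp [hv]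
  linarith

lemma abs_one_sub_sqrt_one_sub_sq_lt {r : ℝ} (h0 : 0 < r) (h1 : r < 1) :
    |1 - √(1 - r ^ 2)| < r := by
  have hs : √(1 - r ^ 2) ^ 2 = 1 - r ^ 2 := Real.sq_sqrt (by nlinarith)
  have hs0 := Real.sqrt_nonneg (1 - r ^ 2)
  rw [abs_lt]
  constructor <;> nlinarith

theorem equal_foci_case (z : ℂ) (hz0 : z ≠ 0) (hz1 : ‖z‖ < 1) :
    (conj z ^ 2 * (z / (‖z‖ : ℂ)) ^ 4
        - 2 * conj z * (z / (‖z‖ : ℂ)) ^ 3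
        + 2 * z * (z / (‖z‖ : ℂ)) - z ^ 2 = 0) ∧
    (∀ v : ℂ, ‖v‖ = 1 →
        conj z ^ 2 * v ^ 4 - 2 * conj z * v ^ 3 + 2 * z * v - z ^ 2 = 0 →
        v = z / (‖z‖ : ℂ) ∨ v = -(z / (‖z‖ : ℂ))) ∧
    (conj z ^ 2 * ((1 + (Real.sqrt (1 - ‖z‖ ^ 2) : ℂ)) / conj z) ^ 4
        - 2 * conj z * ((1 + (Real.sqrt (1 - ‖z‖ ^ 2) : ℂ)) / conj z) ^ 3
        + 2 * z * ((1 + (Real.sqrt (1 - ‖z‖ ^ 2) : ℂ)) / conj z) - z ^ 2 = 0) ∧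
    (conj z ^ 2 * ((1 - (Real.sqrt (1 - ‖z‖ ^ 2) : ℂ)) / conj z) ^ 4
        - 2 * conj z * ((1 - (Real.sqrt (1 - ‖z‖ ^ 2) : ℂ)) / conj z) ^ 3
        + 2 * z * ((1 - (Real.sqrt (1 - ‖z‖ ^ 2) : ℂ)) / conj z) - z ^ 2 = 0) ∧
    ‖(1 + (Real.sqrt (1 - ‖z‖ ^ 2) : ℂ)) / conj z‖ > 1 ∧
    ‖(1 - (Real.sqrt (1 - ‖z‖ ^ 2) : ℂ)) / conj z‖ < 1 := by
  have hr : 0 < ‖z‖ := norm_pos_iff.2 hz0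
  have hzc : conj z ≠ 0 := (map_ne_zero _).2 hz0
  set s := √(1 - ‖z‖ ^ 2)
  have hs0 : 0 ≤ s := Real.sqrt_nonneg _
  have hs : (s : ℂ) ^ 2 = 1 - conj z * z := by
    rw [conj_mul']
    exact_mod_cast Real.sq_sqrt (by nlinarith)
  simp only [quartic_eq_mul]
  refine ⟨?_, fun v hv hq => ?_, ?_, ?_, ?_, ?_⟩
  · exact mul_eq_zero_of_left (sub_eq_zero.2 ((conj_mul_sq_eq_self_iff hz0 _).2 (.inl rfl))) _
  · refine (conj_mul_sq_eq_self_iff hz0 v).1 (sub_eq_zero.1 ?_)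
    refine (mul_eq_zero.1 hq).resolve_right (mul_sq_sub_two_mul_add_ne_zero ?_ hv)
    rw [norm_conj]
    linarith
  · exact mul_eq_zero_of_right _ (mul_sq_sub_two_mul_add_eq_zero hzc hs)
  · have hroot := mul_sq_sub_two_mul_add_eq_zero hzc (s := -(s : ℂ)) (by rw [neg_sq, hs])
    rw [← sub_eq_add_neg] at hroot
    exact mul_eq_zero_of_right _ hroot
  · rw [norm_div, norm_conj, gt_iff_lt, one_lt_div hr]
    calc ‖z‖ < 1 + s := by linarith
      _ = ‖1 + (s : ℂ)‖ := by norm_cast; rw [Real.norm_of_nonneg (by positivity)]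
  · rw [norm_div, norm_conj, div_lt_one hr]
    calc ‖1 - (s : ℂ)‖ = |1 - s| := by norm_cast
      _ < ‖z‖ := abs_one_sub_sqrt_one_sub_sq_lt hr hz1
end

section
/- For z ∈ ℂ with 0 < |z| < 1, the triangular ratio metric in the unit disk satisfies s_𝔻(z, -z) = |z|. -/
/-!
Every point `w` of the unit sphere satisfies `‖z - w‖ + ‖w + z‖ ≥ ‖2 w‖ = 2`, so each ratio is at
most `2‖z‖ / 2 = ‖z‖`. Equality holds at the unit vector `u` pointing in the direction of `z`:
since `z = ‖z‖ u` with `‖z‖ ≤ 1`, the two distances are `1 - ‖z‖` and `1 + ‖z‖`.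
-/

section NormedSpace

variable {E : Type*} [SeminormedAddCommGroup E] [NormedSpace ℝ E]

lemma norm_sub_neg_self (x : E) : ‖x - -x‖ = 2 * ‖x‖ := by
  rw [sub_neg_eq_add, ← two_smul ℝ x, norm_smul_of_nonneg zero_le_two]

lemma two_mul_norm_le_norm_sub_add_norm_sub_neg (x w : E) :
    2 * ‖w‖ ≤ ‖x - w‖ + ‖w - -x‖ := calc
  2 * ‖w‖ = ‖(w - x) + (w - -x)‖ := by
    rw [← norm_sub_neg_self w]; congr 1; abel
  _ ≤ ‖w - x‖ + ‖w - -x‖ := norm_add_le _ _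
  _ = ‖x - w‖ + ‖w - -x‖ := by rw [norm_sub_rev]

lemma norm_sub_add_norm_sub_neg_of_eq_smul {x u : E} (hu : ‖u‖ = 1) (hx : ‖x‖ ≤ 1)
    (hxu : x = ‖x‖ • u) : ‖x - u‖ + ‖u - -x‖ = 2 := by
  have h_sub : x - u = -((1 - ‖x‖) • u) := by rw [sub_smul, one_smul, ← hxu, neg_sub]
  have h_add : u - -x = (1 + ‖x‖) • u := by rw [sub_neg_eq_add, add_smul, one_smul, ← hxu]
  rw [h_sub, h_add, norm_neg, norm_smul_of_nonneg (sub_nonneg.2 hx),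
    norm_smul_of_nonneg (by positivity), hu]
  ring

lemma norm_sub_neg_div_le {x w : E} (hw : ‖w‖ = 1) :
    ‖x - -x‖ / (‖x - w‖ + ‖w - -x‖) ≤ ‖x‖ := by
  have h_two : 2 ≤ ‖x - w‖ + ‖w - -x‖ := by
    simpa [hw] using two_mul_norm_le_norm_sub_add_norm_sub_neg x w
  calc ‖x - -x‖ / (‖x - w‖ + ‖w - -x‖) ≤ 2 * ‖x‖ / 2 := by
        rw [norm_sub_neg_self]
        exact div_le_div_of_nonneg_left (by positivity) two_pos h_two
    _ = ‖x‖ := by ring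

lemma norm_sub_neg_div_eq_of_eq_smul {x u : E} (hu : ‖u‖ = 1) (hx : ‖x‖ ≤ 1)
    (hxu : x = ‖x‖ • u) : ‖x - -x‖ / (‖x - u‖ + ‖u - -x‖) = ‖x‖ := by
  rw [norm_sub_add_norm_sub_neg_of_eq_smul hu hx hxu, norm_sub_neg_self]
  ring

end NormedSpace

theorem sD_z_neg_z_general (z : ℂ) (hz : ‖z‖ < 1) :
    sSup {r : ℝ | ∃ w : ℂ, ‖w‖ = 1 ∧
        r = ‖z - (-z)‖ / (‖z - w‖ + ‖w - (-z)‖)}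
      = ‖z‖ := by
  set u := Complex.exp (z.arg * Complex.I)
  have hu : ‖u‖ = 1 := Complex.norm_exp_ofReal_mul_I _
  have hzu : z = ‖z‖ • u := by rw [Complex.real_smul, Complex.norm_mul_exp_arg_mul_I]
  refine IsGreatest.csSup_eq ⟨⟨u, hu, ?_⟩, ?_⟩
  · exact (norm_sub_neg_div_eq_of_eq_smul hu hz.le hzu).symm
  · rintro r ⟨w, hw, rfl⟩
    exact norm_sub_neg_div_le hw

theorem sD_z_neg_z (z : ℂ) (hz0 : z ≠ 0) (hz : ‖z‖ < 1) :
    sSup {r : ℝ | ∃ w : ℂ, ‖w‖ = 1 ∧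
        r = ‖z - (-z)‖ / (‖z - w‖ + ‖w - (-z)‖)}
      = ‖z‖ :=
  sD_z_neg_z_general z hz
end
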